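/- arXiv:2603.14990 — 3 statements merged into one kernel-verified Lean document; each statement's English description precedes it below -/
import Mathlib

section
/- For all real f < 0, |2(f − 1)| / ((1 − 2f)^{1/2} · (2f² − 5f + 2)) < 1. -/
theorem stmt_2 : ∀ f : ℝ, f < 0 →
    |2 * (f - 1)| / (Real.sqrt (1 - 2 * f) * (2 * f ^ 2 - 5 * f + 2)) < 1 := by
  intro f hf
  have hnum : |2 * (f - 1)| = 2 * (1 - f) := by
    rw [abs_of_nonpos (by linarith)]
    ring
  -- the difference of the two sides is f (2f - 3), a product of two negative factors
  have hnum_lt : 2 * (1 - f) < 2 * f ^ 2 - 5 * f + 2 := by nlinarith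
  have hsqrt : 1 < Real.sqrt (1 - 2 * f) := Real.lt_sqrt_of_sq_lt (by linarith)
  rw [hnum, div_lt_one (by nlinarith)]
  calc 2 * (1 - f) < 2 * f ^ 2 - 5 * f + 2 := hnum_lt
    _ = 1 * (2 * f ^ 2 - 5 * f + 2) := (one_mul _).symm
    _ < Real.sqrt (1 - 2 * f) * (2 * f ^ 2 - 5 * f + 2) :=
      mul_lt_mul_of_pos_right hsqrt (by linarith)
end

section
/- Let K, τ > 0 and f < 0, and define G_x(s) = Kτ(f − s)/(s²(s² + (2 − f)s − 2f + 1)). Then at ω_p = √(1 − 2f), |G_x(iω_p)| = Kτ|f − 1| / (√(1 − 2f) · (2f² − 5f + 2)), and hence |G_x(iω_p)| · (4/π) = 4Kτ(1 − f)/(π√(1 − 2f)(2f² − 5f + 2)). -/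
open Complex Real

theorem stmt_9 (K τ f : ℝ) (hK : K > 0) (hτ : τ > 0) (hf : f < 0)
    (Gx : ℂ → ℂ)
    (hGx : ∀ s : ℂ, Gx s = (K * τ : ℂ) * ((f : ℂ) - s) /
        (s ^ 2 * (s ^ 2 + (2 - (f : ℂ)) * s - 2 * (f : ℂ) + 1))) :
    ‖Gx (Complex.I * (Real.sqrt (1 - 2 * f) : ℝ))‖ * (4 / π) =
      4 * K * τ * (1 - f) / (π * Real.sqrt (1 - 2 * f) * (2 * f ^ 2 - 5 * f + 2)) := by
  set ω : ℝ := Real.sqrt (1 - 2 * f) with hωdef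
  have h12f : (0:ℝ) < 1 - 2 * f := by linarith
  have hω2 : ω ^ 2 = 1 - 2 * f := Real.sq_sqrt h12f.le
  have hωpos : 0 < ω := Real.sqrt_pos.mpr h12f
  have hs2 : (Complex.I * (ω : ℂ)) ^ 2 = ((2 * f - 1 : ℝ) : ℂ) := by
    have : ((ω : ℂ)) ^ 2 = ((1 - 2 * f : ℝ) : ℂ) := by
      norm_cast
    rw [mul_pow, Complex.I_sq, this]
    push_cast
    ring
  rw [hGx, hs2]
  have hden : ((2 * f - 1 : ℝ) : ℂ) + (2 - (f : ℂ)) * (Complex.I * (ω : ℂ)) - 2 * (f : ℂ) + 1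
      = (2 - (f : ℂ)) * (Complex.I * (ω : ℂ)) := by
    push_cast; ring
  rw [hden]
  rw [norm_div, norm_mul, norm_mul]
  have habs1 : ‖((K:ℂ))‖ * ‖((τ:ℂ))‖ = K * τ := by
    rw [Complex.norm_real, Complex.norm_real, Real.norm_eq_abs, Real.norm_eq_abs, abs_of_pos hK, abs_of_pos hτ]
  have habs2 : ‖((f : ℂ) - Complex.I * (ω : ℂ))‖ = 1 - f := by
    rw [Complex.norm_def, Complex.normSq_apply]
    simp only [Complex.sub_re, Complex.sub_im, Complex.ofReal_re, Complex.ofReal_im,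
      Complex.mul_re, Complex.mul_im, Complex.I_re, Complex.I_im]
    have : (f - (0 * ↑ω - 1 * 0)) * (f - (0 * ↑ω - 1 * 0)) +
        (0 - (0 * 0 + 1 * ω)) * (0 - (0 * 0 + 1 * ω)) = (1 - f) ^ 2 := by
      have := hω2; nlinarith [hω2]
    rw [this, Real.sqrt_sq (by linarith)]
  have habs3 : ‖(((2 * f - 1 : ℝ) : ℂ))‖ = 1 - 2 * f := by
    rw [Complex.norm_real, Real.norm_eq_abs, abs_of_neg (by linarith)]; ring
  have habs4 : ‖((2 - (f : ℂ)) * (Complex.I * (ω : ℂ)))‖ = (2 - f) * ω := by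
    rw [norm_mul, norm_mul, Complex.norm_I,
      show (2 - (f : ℂ)) = ((2 - f : ℝ) : ℂ) by push_cast; ring,
      Complex.norm_real, Complex.norm_real, Real.norm_eq_abs, Real.norm_eq_abs, abs_of_pos (by linarith),
      abs_of_pos hωpos]
    ring
  rw [norm_mul, habs1, habs2, habs3, habs4]
  have hπ : (0:ℝ) < π := Real.pi_pos
  have hfac : (2:ℝ) * f ^ 2 - 5 * f + 2 = (1 - 2 * f) * (2 - f) := by ring
  rw [hfac]
  field_simp
end

section
/- For all real f < 0, K > 0, τ > 0: 4Kτ(1 − f)/(π·(1 − 2f)^{1/2}·(2f² − 5f + 2)) < 2Kτ/π. -/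
/-!
The ratio `x̂_D / x̂_S` is `2(1 - f) / (√(1 - 2f) (2f² - 5f + 2))`. For `f < 0` the square root is
at least `1`, and `(2f² - 5f + 2) - 2(1 - f) = f(2f - 3) > 0`, so the ratio is below `1`.
-/

open Real

lemma two_mul_one_sub_lt_sqrt_mul_quadratic {f : ℝ} (hf : f < 0) :
    2 * (1 - f) < √(1 - 2 * f) * (2 * f ^ 2 - 5 * f + 2) := by
  have hs : 1 ≤ √(1 - 2 * f) := Real.one_le_sqrt.mpr (by linarith)
  have hQ : 2 * (1 - f) < 2 * f ^ 2 - 5 * f + 2 := by nlinarith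
  calc 2 * (1 - f) < 2 * f ^ 2 - 5 * f + 2 := hQ
    _ ≤ √(1 - 2 * f) * (2 * f ^ 2 - 5 * f + 2) :=
      le_mul_of_one_le_left (by linarith) hs

theorem stmt_10 : ∀ f K τ : ℝ, f < 0 → K > 0 → τ > 0 →
    4 * K * τ * (1 - f) / (π * Real.sqrt (1 - 2 * f) * (2 * f ^ 2 - 5 * f + 2)) <
      2 * K * τ / π := by
  intro f K τ hf hK hτ
  have hkey := two_mul_one_sub_lt_sqrt_mul_quadratic hf
  have hden : 0 < √(1 - 2 * f) * (2 * f ^ 2 - 5 * f + 2) := by linarith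
  have hratio : 2 * (1 - f) / (√(1 - 2 * f) * (2 * f ^ 2 - 5 * f + 2)) < 1 :=
    (div_lt_one hden).mpr hkey
  calc 4 * K * τ * (1 - f) / (π * √(1 - 2 * f) * (2 * f ^ 2 - 5 * f + 2))
      = 2 * K * τ / π * (2 * (1 - f) / (√(1 - 2 * f) * (2 * f ^ 2 - 5 * f + 2))) := by
        field_simp
        ring
    _ < 2 * K * τ / π * 1 := mul_lt_mul_of_pos_left hratio (by positivity)
    _ = 2 * K * τ / π := mul_one _
end
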